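/- arXiv:math-ph/0412054 — 5 statements merged into one kernel-verified Lean document; each statement's English description precedes it below -/
import Mathlib

section
/- For all real ξ and all ε > 0, ε²/(ξ⁴ + ε⁴) ≤ a/(ξ² + ε²b), where b = 1/√3 and a = (b + √(b² + 1))/2. -/
open Real

theorem stmt0 (ξ ε : ℝ) (hε : 0 < ε) :
    ε ^ 2 / (ξ ^ 4 + ε ^ 4) ≤
      ((1 / Real.sqrt 3 + Real.sqrt ((1 / Real.sqrt 3) ^ 2 + 1)) / 2) /
        (ξ ^ 2 + ε ^ 2 * (1 / Real.sqrt 3)) := by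
  set b : ℝ := 1 / Real.sqrt 3 with hb
  have h3 : (0:ℝ) < Real.sqrt 3 := Real.sqrt_pos.mpr (by norm_num)
  have hbpos : 0 < b := by positivity
  have hb2 : b ^ 2 = 1 / 3 := by
    rw [hb, div_pow, one_pow, Real.sq_sqrt (by norm_num : (3:ℝ) ≥ 0)]
  set s : ℝ := Real.sqrt (b ^ 2 + 1) with hs
  have hs2 : s ^ 2 = b ^ 2 + 1 := Real.sq_sqrt (by positivity)
  have hspos : 0 < s := Real.sqrt_pos.mpr (by positivity)
  have hd1 : 0 < ξ ^ 4 + ε ^ 4 := by positivity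
  have hd2 : 0 < ξ ^ 2 + ε ^ 2 * b := by positivity
  rw [div_le_div_iff₀ hd1 hd2]
  have key : 4 * ((b + s)/2) * ((b + s)/2 - b) = 1 := by nlinarith [hs2, hb2]
  set a : ℝ := (b + s) / 2 with ha
  have hapos : 0 < a := by positivity
  have h : 0 ≤ 2 * a * (a * (ξ ^ 4 + ε ^ 4) - ε ^ 2 * (ξ ^ 2 + ε ^ 2 * b)) := by
    have key2 : 4 * a * (a - b) * ε ^ 4 = ε ^ 4 := by rw [key]; ring
    nlinarith [sq_nonneg (2 * a * ξ ^ 2 - ε ^ 2), key2]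
  have hX : 0 ≤ a * (ξ ^ 4 + ε ^ 4) - ε ^ 2 * (ξ ^ 2 + ε ^ 2 * b) :=
    nonneg_of_mul_nonneg_right h (by positivity)
  linarith
end

section
/- For any positive reals b, and with a := (b + √(b² + 1))/2, the inequality ε²/(ξ⁴ + ε⁴) ≤ a/(ξ² + ε²b) holds for all ξ ∈ ℝ and ε > 0. -/
open Real

theorem stmt1 (b : ℝ) (hb : 0 < b) (ξ ε : ℝ) (hε : 0 < ε) :
    ε ^ 2 / (ξ ^ 4 + ε ^ 4) ≤
      ((b + Real.sqrt (b ^ 2 + 1)) / 2) / (ξ ^ 2 + ε ^ 2 * b) := by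
  set s := Real.sqrt (b ^ 2 + 1) with hsdef
  have hs : s ^ 2 = b ^ 2 + 1 := Real.sq_sqrt (by positivity)
  have hs0 : 0 < s := Real.sqrt_pos.mpr (by positivity)
  have hbs : 0 < b + s := by linarith
  have h2 : 0 ≤ (b + s) * ((b + s) * ξ ^ 4 - 2 * ε ^ 2 * ξ ^ 2 + ε ^ 4 * (s - b)) := by
    nlinarith [sq_nonneg ((b + s) * ξ ^ 2 - ε ^ 2), hs, sq_nonneg ε, sq_nonneg (ε^2)]
  have key : 0 ≤ (b + s) * ξ ^ 4 - 2 * ε ^ 2 * ξ ^ 2 + ε ^ 4 * (s - b) :=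
    nonneg_of_mul_nonneg_right h2 hbs
  rw [div_le_div_iff₀ (by positivity) (by positivity)]
  nlinarith [key]
end

section
/- For an integer l ≥ 2, the supremum over x, y > 0 of f_l(x,y) = y^{2l-2}(x² + y²)/(x^{2l} + y^{2l}) equals (1/l) ζ_l^{l-1}, where ζ_l is the unique positive root of (l-1) + l z - z^l = 0. -/
/-!
Write `a = x²`, `b = y²`, so that the quotient is `b^(l-1) (a + b) / (a^l + b^l)`. By Bernoulli's
inequality, `l (ζ a) b^(l-1) ≤ (ζ a)^l + (l - 1) b^l`; adding `l ζ b^l` and using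
`ζ^l = (l - 1) + l ζ` gives `l ζ b^(l-1) (a + b) ≤ ζ^l (a^l + b^l)`, which is the upper bound
`ζ^(l-1) / l`. Equality holds at `b = ζ a`, i.e. at `x = 1`, `y = √ζ`.
-/

theorem nat_mul_mul_pow_pred_le {l : ℕ} (hl : 1 ≤ l) {a b : ℝ} (ha : 0 ≤ a) (hb : 0 < b) :
    l * a * b ^ (l - 1) ≤ a ^ l + (l - 1) * b ^ l := by
  have hbl : b ^ l = b ^ (l - 1) * b := by rw [← pow_succ, Nat.sub_add_cancel hl]
  have bernoulli := one_add_mul_le_pow (a := a / b - 1) (by linarith [div_nonneg ha hb.le]) l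
  rw [add_sub_cancel, div_pow, le_div_iff₀ (by positivity)] at bernoulli
  have hscale : (1 + l * (a / b - 1)) * b ^ l = b ^ l + l * (a - b) * b ^ (l - 1) := by
    rw [hbl]; field_simp
  rw [hscale] at bernoulli
  linear_combination bernoulli - l * hbl

noncomputable def powRatio (l : ℕ) (a b : ℝ) : ℝ :=
  b ^ (l - 1) * (a + b) / (a ^ l + b ^ l)

theorem powRatio_sq (l : ℕ) (x y : ℝ) :
    powRatio l (x ^ 2) (y ^ 2) =
      y ^ (2 * l - 2) * (x ^ 2 + y ^ 2) / (x ^ (2 * l) + y ^ (2 * l)) := by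
  rw [powRatio, ← pow_mul, ← pow_mul, ← pow_mul, Nat.mul_sub_one]

section

variable {l : ℕ} {ζ : ℝ}

theorem powRatio_le (hl : 1 ≤ l) (hζ : 0 < ζ) (hroot : ζ ^ l = l - 1 + l * ζ)
    {a b : ℝ} (ha : 0 < a) (hb : 0 < b) :
    powRatio l a b ≤ 1 / l * ζ ^ (l - 1) := by
  have hl0 : (0 : ℝ) < l := by exact_mod_cast hl
  rw [powRatio, div_le_iff₀ (by positivity), ← mul_le_mul_iff_of_pos_left (mul_pos hl0 hζ)]
  have amgm := nat_mul_mul_pow_pred_le hl (mul_pos hζ ha).le hb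
  have hζl : ζ ^ (l - 1) * ζ = ζ ^ l := by rw [← pow_succ, Nat.sub_add_cancel hl]
  have hbl : b ^ (l - 1) * b = b ^ l := by rw [← pow_succ, Nat.sub_add_cancel hl]
  calc l * ζ * (b ^ (l - 1) * (a + b))
      = l * (ζ * a) * b ^ (l - 1) + l * ζ * (b ^ (l - 1) * b) := by ring
    _ ≤ (ζ * a) ^ l + (l - 1) * b ^ l + l * ζ * b ^ l := by rw [hbl]; linarith
    _ = ζ ^ l * (a ^ l + b ^ l) := by rw [mul_pow, hroot]; ring
    _ = l * ζ * (1 / l * ζ ^ (l - 1) * (a ^ l + b ^ l)) := by rw [← hζl]; field_simp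

theorem powRatio_one_root (hl : 1 ≤ l) (hζ : 0 < ζ) (hroot : ζ ^ l = l - 1 + l * ζ) :
    powRatio l 1 ζ = 1 / l * ζ ^ (l - 1) := by
  have hl0 : (0 : ℝ) < l := by exact_mod_cast hl
  have hden : (1 : ℝ) ^ l + ζ ^ l = l * (1 + ζ) := by rw [one_pow, hroot]; ring
  rw [powRatio, hden]
  field_simp

end

theorem stmt5_general (l : ℕ) (hl : 2 ≤ l) (ζ : ℝ) (hζ : 0 < ζ)
    (hroot : ((l : ℝ) - 1) + l * ζ - ζ ^ l = 0) :
    IsLUB {s : ℝ | ∃ x : ℝ, 0 < x ∧ ∃ y : ℝ, 0 < y ∧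
        s = y ^ (2 * l - 2) * (x ^ 2 + y ^ 2) / (x ^ (2 * l) + y ^ (2 * l))}
      ((1 / l) * ζ ^ (l - 1)) := by
  have hl1 : 1 ≤ l := by omega
  have hζl : ζ ^ l = l - 1 + l * ζ := by linarith
  refine IsGreatest.isLUB ⟨⟨1, one_pos, √ζ, Real.sqrt_pos.2 hζ, ?_⟩, ?_⟩
  · rw [← powRatio_sq, one_pow, Real.sq_sqrt hζ.le, powRatio_one_root hl1 hζ hζl]
  · rintro s ⟨x, hx, y, hy, rfl⟩
    rw [← powRatio_sq]
    exact powRatio_le hl1 hζ hζl (by positivity) (by positivity)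

theorem stmt5 (l : ℕ) (hl : 2 ≤ l) (ζ : ℝ) (hζ : 0 < ζ)
    (hroot : ((l : ℝ) - 1) + l * ζ - ζ ^ l = 0)
    (huniq : ∀ z : ℝ, 0 < z → ((l : ℝ) - 1) + l * z - z ^ l = 0 → z = ζ) :
    IsLUB {s : ℝ | ∃ x : ℝ, 0 < x ∧ ∃ y : ℝ, 0 < y ∧
        s = y ^ (2 * l - 2) * (x ^ 2 + y ^ 2) / (x ^ (2 * l) + y ^ (2 * l))}
      ((1 / l) * ζ ^ (l - 1)) :=
  stmt5_general l hl ζ hζ hroot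
end

section
/- Let γ > 3/4. Then ∫_0^∞ t^{γ - 7/4} ((t + λ)_-)^{3/4} dt = (λ_-)^γ · B(γ - 3/4, 7/4) for every real λ, where x_- := (|x| - x)/2 denotes the negative part and B is the Euler Beta function. -/
open Real MeasureTheory

/-- The negative part `x₋ = (|x| - x)/2`. -/
noncomputable def negativePart (x : ℝ) : ℝ := (|x| - x) / 2

lemma beta_real (s t : ℝ) (hs : 0 < s) (ht : 0 < t) {a : ℝ} (ha : 0 < a) :
    ∫ x in (0:ℝ)..a, x ^ (s - 1) * (a - x) ^ (t - 1) =
      a ^ (s + t - 1) * (Real.Gamma s * Real.Gamma t / Real.Gamma (s + t)) := by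
  have hst : (0:ℝ) < s + t := by linarith
  have hΓ : Real.Gamma (s + t) ≠ 0 := (Real.Gamma_pos_of_pos hst).ne'
  have h1 := Complex.betaIntegral_scaled (s : ℂ) (t : ℂ) ha
  have h2 := Complex.Gamma_mul_Gamma_eq_betaIntegral (s := (s:ℂ)) (t := (t:ℂ))
    (by simpa using hs) (by simpa using ht)
  have hΓC : (Complex.Gamma ((s:ℂ) + t)) ≠ 0 := by
    rw [show ((s:ℂ) + t) = ((s+t : ℝ) : ℂ) by push_cast; ring, Complex.Gamma_ofReal]
    exact_mod_cast hΓ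
  have hbeta : Complex.betaIntegral s t =
      Complex.Gamma s * Complex.Gamma t / Complex.Gamma ((s:ℂ) + t) := by
    rw [h2, mul_div_cancel_left₀ _ hΓC]
  -- complexify the real integral
  have hconv : ((∫ x in (0:ℝ)..a, x ^ (s - 1) * (a - x) ^ (t - 1) : ℝ) : ℂ) =
      ∫ x in (0:ℝ)..a, (x:ℂ) ^ ((s:ℂ) - 1) * ((a:ℝ) - x : ℂ) ^ ((t:ℂ) - 1) := by
    rw [← intervalIntegral.integral_ofReal]
    apply intervalIntegral.integral_congr
    intro x hx
    rw [Set.uIcc_of_le ha.le] at hx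
    have hx0 : (0:ℝ) ≤ x := hx.1
    have hax : (0:ℝ) ≤ a - x := by linarith [hx.2]
    push_cast
    rw [Complex.ofReal_cpow hx0, Complex.ofReal_cpow hax]
    push_cast
    ring
  have key : ((∫ x in (0:ℝ)..a, x ^ (s - 1) * (a - x) ^ (t - 1) : ℝ) : ℂ) =
      ((a ^ (s + t - 1) * (Real.Gamma s * Real.Gamma t / Real.Gamma (s + t)) : ℝ) : ℂ) := by
    rw [hconv, h1, hbeta]
    rw [Complex.ofReal_mul, Complex.ofReal_cpow ha.le]
    rw [show ((s:ℂ) + t) = ((s+t : ℝ) : ℂ) by push_cast; ring]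
    rw [Complex.Gamma_ofReal, Complex.Gamma_ofReal, Complex.Gamma_ofReal]
    push_cast
    ring
  exact_mod_cast key

theorem stmt12 (γ : ℝ) (hγ : 3 / 4 < γ) (lam : ℝ) :
    ∫ t in Set.Ioi (0 : ℝ), t ^ (γ - 7 / 4) * negativePart (t + lam) ^ ((3 : ℝ) / 4) =
      negativePart lam ^ γ *
        (Real.Gamma (γ - 3 / 4) * Real.Gamma (7 / 4) / Real.Gamma (γ + 1)) := by
  have hγ0 : γ ≠ 0 := by positivity
  rcases le_or_gt 0 lam with hlam | hlam
  · -- nonnegative case: both sides vanish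
    have hL : ∫ t in Set.Ioi (0 : ℝ), t ^ (γ - 7 / 4) * negativePart (t + lam) ^ ((3:ℝ)/4) = 0 := by
      rw [MeasureTheory.setIntegral_congr_fun measurableSet_Ioi
        (g := fun _ => (0:ℝ))]
      · simp
      · intro t ht
        dsimp only
        have h1 : (0:ℝ) ≤ t + lam := by have := ht.out; linarith
        have : negativePart (t + lam) = 0 := by
          unfold negativePart; rw [abs_of_nonneg h1]; ring
        rw [this, Real.zero_rpow (by norm_num), mul_zero]
    have hR : negativePart lam = 0 := by
      unfold negativePart; rw [abs_of_nonneg hlam]; ring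
    rw [hL, hR, Real.zero_rpow hγ0, zero_mul]
  · -- negative case
    set μ := -lam with hμdef
    have hμ : 0 < μ := by simp [hμdef]; linarith
    have hnp : negativePart lam = μ := by
      unfold negativePart; rw [abs_of_neg hlam]; ring
    have hfeq : ∀ t ∈ Set.Ioi (0:ℝ),
        t ^ (γ - 7 / 4) * negativePart (t + lam) ^ ((3:ℝ)/4) =
        Set.indicator (Set.Ioc 0 μ) (fun x => x ^ (γ - 7/4) * (μ - x) ^ ((3:ℝ)/4)) t := by
      intro t ht
      rcases le_or_gt t μ with h | h
      · rw [Set.indicator_of_mem (Set.mem_Ioc.mpr ⟨ht.out, h⟩)]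
        have h1 : t + lam ≤ 0 := by linarith [hμ.le]; 
        have : negativePart (t + lam) = μ - t := by
          unfold negativePart; rw [abs_of_nonpos h1]; ring
        rw [this]
      · rw [Set.indicator_of_notMem (by simp [h.not_ge])]
        have h1 : (0:ℝ) ≤ t + lam := by
          have : μ < t := h; linarith
        have : negativePart (t + lam) = 0 := by
          unfold negativePart; rw [abs_of_nonneg h1]; ring
        rw [this, Real.zero_rpow (by norm_num), mul_zero]
    rw [MeasureTheory.setIntegral_congr_fun measurableSet_Ioi hfeq,
      MeasureTheory.setIntegral_indicator measurableSet_Ioc]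
    have hset : Set.Ioi (0:ℝ) ∩ Set.Ioc 0 μ = Set.Ioc 0 μ :=
      Set.inter_eq_self_of_subset_right Set.Ioc_subset_Ioi_self
    rw [hset, ← intervalIntegral.integral_of_le hμ.le]
    have := beta_real (γ - 3/4) (7/4) (by linarith) (by norm_num) hμ
    rw [show γ - 3/4 - 1 = γ - 7/4 by ring, show (7:ℝ)/4 - 1 = 3/4 by ring,
      show γ - 3/4 + 7/4 - 1 = γ by ring, show γ - 3/4 + 7/4 = γ + 1 by ring] at this
    rw [this, hnp]
end

section
/- For γ > ν with 0 < ν < 1, ∫_0^∞ t^{γ - (1+ν)} ((t + λ)_-)^ν dt = (λ_-)^γ B(γ - ν, 1 + ν) for every real λ, where x_- := (|x|-x)/2 and B is the Beta function. -/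
open Real MeasureTheory

lemma negativePart_of_nonneg {x : ℝ} (hx : 0 ≤ x) : negativePart x = 0 := by
  simp [negativePart, abs_of_nonneg hx]

lemma negativePart_of_nonpos {x : ℝ} (hx : x ≤ 0) : negativePart x = -x := by
  simp [negativePart, abs_of_nonpos hx]; ring

lemma real_scaled_beta (a b μ : ℝ) (ha : 0 < a) (hb : 0 < b) (hμ : 0 < μ) :
    ∫ x in (0:ℝ)..μ, x ^ (a - 1) * (μ - x) ^ (b - 1) =
      μ ^ (a + b - 1) * (Real.Gamma a * Real.Gamma b / Real.Gamma (a + b)) := by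
  have hΓ : (Real.Gamma (a + b) : ℝ) ≠ 0 := (Real.Gamma_pos_of_pos (by positivity)).ne'
  have hΓC : Complex.Gamma ((a : ℂ) + b) ≠ 0 := by
    rw [(by push_cast; ring : ((a : ℂ) + b) = ((a + b : ℝ) : ℂ)), Complex.Gamma_ofReal]
    exact_mod_cast hΓ
  have hbeta : Complex.betaIntegral a b =
      ((Real.Gamma a * Real.Gamma b / Real.Gamma (a + b) : ℝ) : ℂ) := by
    have h := Complex.Gamma_mul_Gamma_eq_betaIntegral
      (s := (a : ℂ)) (t := (b : ℂ)) (by simpa using ha) (by simpa using hb)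
    have h2 : Complex.betaIntegral a b =
        Complex.Gamma a * Complex.Gamma b / Complex.Gamma ((a : ℂ) + b) := by
      rw [eq_div_iff hΓC, mul_comm]
      exact h.symm
    rw [h2, (by push_cast; ring : ((a:ℂ) + b) = ((a + b : ℝ) : ℂ)),
      Complex.Gamma_ofReal, Complex.Gamma_ofReal, Complex.Gamma_ofReal]
    push_cast
    ring
  have key := Complex.betaIntegral_scaled (a : ℂ) (b : ℂ) hμ
  have hL : (∫ x in (0:ℝ)..μ, (x : ℂ) ^ ((a : ℂ) - 1) * ((μ : ℂ) - x) ^ ((b : ℂ) - 1)) =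
      ((∫ x in (0:ℝ)..μ, x ^ (a - 1) * (μ - x) ^ (b - 1) : ℝ) : ℂ) := by
    rw [← intervalIntegral.integral_ofReal]
    rw [intervalIntegral.integral_of_le hμ.le, intervalIntegral.integral_of_le hμ.le]
    refine setIntegral_congr_fun measurableSet_Ioc fun x hx => ?_
    have hx0 : (0:ℝ) ≤ x := hx.1.le
    have hx1 : (0:ℝ) ≤ μ - x := by linarith [hx.2]
    push_cast [Complex.ofReal_cpow hx0, Complex.ofReal_cpow hx1]
    ring
  rw [hL, hbeta] at key
  have hR : ((μ : ℂ)) ^ ((a : ℂ) + b - 1) = ((μ ^ (a + b - 1) : ℝ) : ℂ) := by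
    rw [Complex.ofReal_cpow hμ.le]; push_cast; ring_nf
  rw [hR, ← Complex.ofReal_mul] at key
  exact_mod_cast key

theorem stmt13 (ν γ : ℝ) (hν0 : 0 < ν) (hν1 : ν < 1) (hγ : ν < γ) (lam : ℝ) :
    ∫ t in Set.Ioi (0 : ℝ), t ^ (γ - (1 + ν)) * negativePart (t + lam) ^ ν =
      negativePart lam ^ γ *
        (Real.Gamma (γ - ν) * Real.Gamma (1 + ν) / Real.Gamma (γ + 1)) := by
  rcases le_or_gt 0 lam with hlam | hlam
  · have h1 : ∀ t ∈ Set.Ioi (0:ℝ),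
        t ^ (γ - (1 + ν)) * negativePart (t + lam) ^ ν = 0 := by
      intro t ht
      rw [negativePart_of_nonneg (by linarith [Set.mem_Ioi.mp ht]),
        Real.zero_rpow hν0.ne', mul_zero]
    rw [setIntegral_congr_fun measurableSet_Ioi h1, integral_zero,
      negativePart_of_nonneg hlam, Real.zero_rpow (by linarith : γ ≠ 0), zero_mul]
  · obtain ⟨μ, rfl⟩ : ∃ μ : ℝ, lam = -μ := ⟨-lam, by ring⟩
    have hμ : 0 < μ := by linarith
    have hstep1 : (∫ t in Set.Ioi (0:ℝ), t ^ (γ - (1 + ν)) * negativePart (t + -μ) ^ ν) =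
        ∫ t in Set.Ioo 0 μ, t ^ (γ - (1 + ν)) * negativePart (t + -μ) ^ ν := by
      refine setIntegral_eq_of_subset_of_forall_diff_eq_zero measurableSet_Ioi
        Set.Ioo_subset_Ioi_self fun x hx => ?_
      have hx0 : 0 < x := hx.1
      have hxμ : μ ≤ x := by
        by_contra h
        exact hx.2 ⟨hx0, lt_of_not_ge h⟩
      rw [negativePart_of_nonneg (by linarith), Real.zero_rpow hν0.ne', mul_zero]
    have hstep2 : (∫ t in Set.Ioo (0:ℝ) μ, t ^ (γ - (1 + ν)) * negativePart (t + -μ) ^ ν) =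
        ∫ t in Set.Ioo (0:ℝ) μ, t ^ (γ - ν - 1) * (μ - t) ^ (ν + 1 - 1) := by
      refine setIntegral_congr_fun measurableSet_Ioo fun t ht => ?_
      rw [negativePart_of_nonpos (by linarith [ht.2] : t + -μ ≤ 0),
        (by ring : -(t + -μ) = μ - t), (by ring : γ - (1 + ν) = γ - ν - 1),
        (by ring : ν + 1 - 1 = ν)]
    have hstep3 : (∫ t in Set.Ioo (0:ℝ) μ, t ^ (γ - ν - 1) * (μ - t) ^ (ν + 1 - 1)) =
        ∫ t in (0:ℝ)..μ, t ^ (γ - ν - 1) * (μ - t) ^ (ν + 1 - 1) := by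
      rw [intervalIntegral.integral_of_le hμ.le, integral_Ioc_eq_integral_Ioo]
    rw [hstep1, hstep2, hstep3,
      real_scaled_beta (γ - ν) (ν + 1) μ (by linarith) (by linarith) hμ,
      negativePart_of_nonpos (by linarith : -μ ≤ 0),
      (by ring : γ - ν + (ν + 1) - 1 = γ), (by ring : γ - ν + (ν + 1) = γ + 1),
      add_comm (1:ℝ) ν, neg_neg]
end
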